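/- arXiv:2009.05928 — 3 statements merged into one kernel-verified Lean document; each statement's English description precedes it below -/
import Mathlib

section
/- Let (A_i)_{i ∈ ℤ} be a long exact sequence of finite abelian groups with A_i = 0 for all but finitely many i. If |A_{-i}| = |A_i| for every integer i, then |A_0| is the square of a natural number. -/
theorem sq_aux (n a b : ℕ) (ha : 0 < a) (h : n * a ^ 2 = b ^ 2) : ∃ k, n = k ^ 2 := by
  have hd : a ∣ b := (Nat.pow_dvd_pow_iff (two_ne_zero)).mp ⟨n, by rw [← h]; ring⟩
  obtain ⟨k, rfl⟩ := hd
  refine ⟨k, ?_⟩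
  have : n * a ^ 2 = k ^ 2 * a ^ 2 := by rw [h]; ring
  exact Nat.eq_of_mul_eq_mul_right (by positivity) this

/-- For a long exact sequence `(A i)_{i ∈ ℤ}` of finite abelian groups
with `A i = 0` for all but finitely many `i`, if `|A (-i)| = |A i|` for every `i`, then
`|A 0|` is the square of a natural number. -/
theorem stmt_1 (A : ℤ → Type) [∀ i, AddCommGroup (A i)] [∀ i, Finite (A i)]
    (α : ∀ i : ℤ, A i →+ A (i + 1))
    (hexact : ∀ i : ℤ, (α (i + 1)).ker = (α i).range)
    (htriv : Set.Finite {i : ℤ | Nat.card (A i) ≠ 1})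
    (hsym : ∀ i : ℤ, Nat.card (A (-i)) = Nat.card (A i)) :
    ∃ k : ℕ, Nat.card (A 0) = k ^ 2 := by
  set n : ℤ → ℕ := fun i => Nat.card (A i) with hn
  set r : ℤ → ℕ := fun i => Nat.card ((α i).range) with hr
  have rpos : ∀ i, 0 < r i := fun i => Nat.card_pos
  have npos : ∀ i, 0 < n i := fun i => Nat.card_pos
  -- n (i+1) = r i * r (i+1)
  have key : ∀ i : ℤ, n (i + 1) = r i * r (i + 1) := by
    intro i
    have h1 : n (i + 1) = Nat.card (A (i+1) ⧸ (α (i+1)).ker) * Nat.card ((α (i+1)).ker) :=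
      AddSubgroup.card_eq_card_quotient_mul_card_addSubgroup _
    have h2 : Nat.card (A (i+1) ⧸ (α (i+1)).ker) = r (i + 1) :=
      Nat.card_congr (QuotientAddGroup.quotientKerEquivRange (α (i+1))).toEquiv
    have h3 : Nat.card ((α (i+1)).ker) = r i := by rw [hexact i]
    rw [h1, h2, h3, Nat.mul_comm]
  have keyA : ∀ i : ℤ, n i = r (i - 1) * r i := by
    intro i
    have h := key (i - 1)
    rwa [show i - 1 + 1 = i by ring] at h
  -- divisibility
  have rdvd : ∀ i : ℤ, r i ∣ n (i + 1) := fun i => AddSubgroup.card_addSubgroup_dvd_card _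
  -- bound
  obtain ⟨ub, hub⟩ := htriv.bddAbove
  obtain ⟨lb, hlb⟩ := htriv.bddBelow
  have hone : ∀ i : ℤ, (i < lb ∨ ub < i) → n i = 1 := by
    intro i hi
    by_contra h
    have : i ∈ {i : ℤ | Nat.card (A i) ≠ 1} := h
    rcases hi with hi | hi
    · exact absurd (hlb this) (by omega)
    · exact absurd (hub this) (by omega)
  obtain ⟨N, hN1, hN2⟩ : ∃ N : ℕ, ub < (N : ℤ) ∧ -(N : ℤ) < lb := by
    refine ⟨(ub.natAbs + lb.natAbs + 1), ?_, ?_⟩ <;> omega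
  have rN : r N = 1 := Nat.eq_one_of_dvd_one (by
    have := rdvd (N : ℤ); rwa [hone ((N:ℤ)+1) (Or.inr (by omega))] at this)
  have rNeg : r (-(N : ℤ) - 1) = 1 := Nat.eq_one_of_dvd_one (by
    have := rdvd (-(N:ℤ) - 1)
    rwa [hone (-(N:ℤ) - 1 + 1) (Or.inl (by omega))] at this)
  -- t
  set t : ℕ → ℕ := fun i => r (-(i : ℤ) - 1) * r (i : ℤ) with ht
  have tC : ∀ i : ℕ, t i * t (i + 1) = (r (i : ℤ) * r ((i : ℤ) + 1)) ^ 2 := by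
    intro i
    have h1 : n ((i : ℤ) + 1) = r (i : ℤ) * r ((i : ℤ) + 1) := key i
    have h2 : n (-(i:ℤ) - 1) = r (-(i:ℤ) - 2) * r (-(i:ℤ) - 1) := by
      have h := keyA (-(i : ℤ) - 1)
      rwa [show -(i:ℤ) - 1 - 1 = -(i:ℤ) - 2 by ring] at h
    have h3 : n (-(i:ℤ) - 1) = n ((i:ℤ) + 1) := by
      have h := hsym ((i : ℤ) + 1)
      rwa [show -((i:ℤ)+1) = -(i:ℤ) - 1 by ring] at h
    have h4 : r (-(i:ℤ) - 2) * r (-(i:ℤ) - 1) = r (i : ℤ) * r ((i : ℤ) + 1) := by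
      rw [← h1, ← h2]; exact h3
    have e1 : t i = r (-(i:ℤ) - 1) * r (i : ℤ) := rfl
    have e2 : t (i + 1) = r (-(i:ℤ) - 2) * r ((i:ℤ) + 1) := by
      simp only [ht]
      rw [show -((i:ℕ)+1 : ℕ) - 1 = -(i:ℤ) - 2 by push_cast; ring,
        show (((i:ℕ)+1 : ℕ) : ℤ) = (i:ℤ) + 1 by push_cast; ring]
    rw [e1, e2]
    calc r (-(i:ℤ) - 1) * r (i : ℤ) * (r (-(i:ℤ) - 2) * r ((i:ℤ) + 1))
        = (r (-(i:ℤ) - 2) * r (-(i:ℤ) - 1)) * (r (i : ℤ) * r ((i:ℤ) + 1)) := by ring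
      _ = (r (i : ℤ) * r ((i : ℤ) + 1)) ^ 2 := by rw [h4]; ring
  have tD : ∀ i : ℕ, ∃ a b : ℕ, 0 < a ∧ t 0 * a ^ 2 = t i * b ^ 2 := by
    intro i
    induction i with
    | zero => exact ⟨1, 1, one_pos, rfl⟩
    | succ j ih =>
      obtain ⟨a, b, ha, hab⟩ := ih
      refine ⟨a * t (j + 1), (r (j : ℤ) * r ((j : ℤ) + 1)) * b, ?_, ?_⟩
      · have : 0 < t (j + 1) := Nat.mul_pos (rpos _) (rpos _)
        positivity
      · have hc := tC j
        calc t 0 * (a * t (j+1)) ^ 2 = (t 0 * a ^ 2) * t (j+1) ^ 2 := by ring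
          _ = t j * b ^ 2 * t (j+1) ^ 2 := by rw [hab]
          _ = (t j * t (j+1)) * t (j+1) * b ^ 2 := by ring
          _ = (r (j:ℤ) * r ((j:ℤ)+1)) ^ 2 * t (j+1) * b ^ 2 := by rw [hc]
          _ = t (j + 1) * ((r (j:ℤ) * r ((j:ℤ)+1)) * b) ^ 2 := by ring
  obtain ⟨a, b, ha, hab⟩ := tD N
  have htN : t N = 1 := by simp only [ht]; rw [rN, rNeg]
  have ht0 : t 0 = n 0 := by
    show r (-((0:ℕ):ℤ) - 1) * r ((0:ℕ):ℤ) = n 0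
    rw [show -((0:ℕ):ℤ) - 1 = (0:ℤ) - 1 by norm_num, show ((0:ℕ):ℤ) = 0 by norm_num, ← keyA 0]
  rw [htN, one_mul] at hab
  rw [ht0] at hab
  exact sq_aux _ a b ha hab
end

section
/- If a finite abelian group T carries a nondegenerate skew-symmetric bilinear form b : T × T → ℚ/ℤ with b(x,x) = 0 for all x, then T is isomorphic to H ⊕ H for some finite abelian group H; in particular |T| is a perfect square. -/
set_option maxHeartbeats 1000000


lemma torsion_aux (n : ℕ) (hn : n ≠ 0) (z : AddCircle (1 : ℚ)) (hz : n • z = 0) :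
    ∃ k : ℤ, z = k • (((n : ℚ)⁻¹ : ℚ) : AddCircle (1 : ℚ)) := by
  have hnq : (n : ℚ) ≠ 0 := Nat.cast_ne_zero.mpr hn
  induction z using QuotientAddGroup.induction_on with
  | H q =>
    rw [← QuotientAddGroup.mk_nsmul, QuotientAddGroup.eq_zero_iff] at hz
    obtain ⟨k, hk⟩ := hz
    simp only [zsmul_eq_mul, mul_one] at hk
    refine ⟨k, ?_⟩
    rw [← QuotientAddGroup.mk_zsmul]
    congr 1
    have : (k : ℚ) = n * q := by rw [hk]; simp [nsmul_eq_mul]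
    rw [zsmul_eq_mul]
    field_simp
    linarith [this]

lemma tau_zero_iff (n : ℕ) (hn : n ≠ 0) (k : ℤ) :
    k • (((n : ℚ)⁻¹ : ℚ) : AddCircle (1 : ℚ)) = 0 ↔ (n : ℤ) ∣ k := by
  have hnq : (n : ℚ) ≠ 0 := Nat.cast_ne_zero.mpr hn
  rw [← QuotientAddGroup.mk_zsmul, QuotientAddGroup.eq_zero_iff]
  constructor
  · rintro ⟨m, hm⟩
    simp only [zsmul_eq_mul, mul_one] at hm
    refine ⟨m, ?_⟩
    have : (k : ℚ) = n * m := by field_simp at hm; linarith [hm]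
    exact_mod_cast this
  · rintro ⟨m, rfl⟩
    refine ⟨m, ?_⟩
    simp only [zsmul_eq_mul, mul_one]
    push_cast
    field_simp

theorem wall_aux : ∀ (n : ℕ) (T : Type) [AddCommGroup T] [Finite T], Nat.card T = n →
    ∀ (b : T →+ T →+ AddCircle (1 : ℚ)), (∀ x : T, b x x = 0) →
    Function.Injective (fun x : T => b x) →
    ∃ (H : Type) (_ : AddCommGroup H) (_ : Finite H), Nonempty (T ≃+ H × H) := by
  intro n
  induction n using Nat.strong_induction_on with
  | _ n IH =>
  intro T _ _ hcard b halt hinj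
  have hskew : ∀ x y : T, b x y = - b y x := by
    intro x y
    have h := halt (x + y)
    simp only [map_add, AddMonoidHom.add_apply, halt] at h
    linear_combination (norm := abel_nf) h
  rcases subsingleton_or_nontrivial T with hT | hT
  · haveI : Unique T := uniqueOfSubsingleton 0
    haveI : Unique (PUnit × PUnit) := ⟨⟨(default, default)⟩, fun x => rfl⟩
    exact ⟨PUnit, inferInstance, inferInstance, ⟨AddEquiv.ofUnique⟩⟩
  -- nontrivial case
  set m := AddMonoid.exponent T with hm
  have hm1 : 1 < m := AddMonoid.one_lt_exponent
  have hm0 : m ≠ 0 := by omega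
  have hsm : ∀ t : T, m • t = 0 := fun t => AddMonoid.exponent_nsmul_eq_zero t
  have hEE : AddMonoid.ExponentExists T := ⟨m, by omega, hsm⟩
  obtain ⟨u, hu⟩ := AddMonoid.exists_addOrderOf_eq_exponent hEE
  set φ : T →+ AddCircle (1 : ℚ) := b u with hφ
  have hφord : addOrderOf φ = m := by
    rw [hφ, addOrderOf_injective b hinj u, hu]
  haveI : Finite φ.range := Set.Finite.to_subtype (Set.finite_range φ)
  -- exponent of range φ is m
  have hrange_exp : AddMonoid.exponent φ.range = m := by
    apply Nat.dvd_antisymm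
    · rw [AddMonoid.exponent_dvd_iff_forall_nsmul_eq_zero]
      rintro ⟨_, y, rfl⟩
      ext1
      simp only [AddSubgroup.coe_nsmul, ZeroMemClass.coe_zero]
      rw [← map_nsmul, hsm, map_zero]
    · rw [← hφord]
      apply addOrderOf_dvd_of_nsmul_eq_zero
      ext y
      simp only [AddMonoidHom.nsmul_apply, AddMonoidHom.zero_apply]
      have := AddMonoid.exponent_nsmul_eq_zero (G := φ.range) ⟨φ y, ⟨y, rfl⟩⟩
      have := congrArg (Subtype.val) this
      simpa using this
  obtain ⟨g, hg⟩ := AddMonoid.exists_addOrderOf_eq_exponent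
    (⟨m, by omega, by rw [← hrange_exp]; exact fun t => AddMonoid.exponent_nsmul_eq_zero t⟩ :
      AddMonoid.ExponentExists φ.range)
  rw [hrange_exp] at hg
  obtain ⟨gval, y, hy⟩ := g
  have hyord : addOrderOf (b u y) = m := by
    rw [← hg, ← addOrderOf_injective φ.range.subtype Subtype.coe_injective]
    simp [hy]
    exact congrArg addOrderOf hy
  -- τ := 1/m in AddCircle
  set τ : AddCircle (1 : ℚ) := (((m : ℚ)⁻¹ : ℚ) : AddCircle (1 : ℚ)) with hτ
  have hτ_zero : ∀ k : ℤ, k • τ = 0 ↔ (m : ℤ) ∣ k := fun k => tau_zero_iff m hm0 k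
  -- b u y = a • τ for some a
  obtain ⟨a, ha⟩ := torsion_aux m hm0 (b u y) (by
    rw [← hyord]; exact addOrderOf_nsmul_eq_zero (b u y))
  -- gcd a m = 1
  have hcop : IsCoprime (a : ℤ) (m : ℤ) := by
    rw [Int.isCoprime_iff_gcd_eq_one]
    by_contra hd
    set d : ℕ := Int.gcd a m with hdd
    have hdm : (d : ℤ) ∣ (m : ℤ) := Int.gcd_dvd_right _ _
    have hda : (d : ℤ) ∣ a := Int.gcd_dvd_left _ _
    have hdm' : d ∣ m := Int.ofNat_dvd.mp hdm
    have hd0 : d ≠ 0 := by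
      intro h0
      rw [h0] at hdm'
      exact hm0 (Nat.eq_zero_of_zero_dvd hdm')
    have hd2 : 2 ≤ d := by omega
    set m' : ℕ := m / d with hm'
    have hm'lt : m' < m := Nat.div_lt_self (by omega) (by omega)
    have hm'pos : 0 < m' := Nat.div_pos (Nat.le_of_dvd (by omega) hdm') (by omega)
    obtain ⟨a', ha'⟩ := hda
    have hkill : m' • (b u y) = 0 := by
      rw [ha, ← natCast_zsmul, smul_smul]
      rw [hτ_zero]
      refine ⟨a', ?_⟩
      have hnat : m = d * m' := by
        rw [hm', Nat.mul_div_cancel' hdm']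
      have : (m : ℤ) = d * m' := by exact_mod_cast hnat
      rw [this, ha']
      ring
    have : m ∣ m' := hyord ▸ addOrderOf_dvd_of_nsmul_eq_zero hkill
    exact absurd (Nat.le_of_dvd hm'pos this) (by omega)
  obtain ⟨c, e, hce⟩ := hcop
  set v : T := c • y with hv
  have hbuv : b u v = τ := by
    rw [hv, map_zsmul, ha, smul_smul]
    have h1 : c * a = 1 - e * m := by linarith [hce]
    rw [h1, sub_smul, one_smul]
    have : (e * (m : ℤ)) • τ = 0 := (hτ_zero _).mpr ⟨e, by ring⟩
    rw [this, sub_zero]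
  have hmu : (m : ℤ) • u = 0 := by rw [natCast_zsmul]; exact hsm u
  have hmv : (m : ℤ) • v = 0 := by rw [natCast_zsmul]; exact hsm v
  -- the ZMod m lifts
  set gu : ZMod m →+ T := ZMod.lift m ⟨zmultiplesHom T u, hmu⟩ with hgu
  set gv : ZMod m →+ T := ZMod.lift m ⟨zmultiplesHom T v, hmv⟩ with hgv
  have hgu_coe : ∀ k : ℤ, gu (k : ZMod m) = k • u := fun k => ZMod.lift_coe m _ k
  have hgv_coe : ∀ k : ℤ, gv (k : ZMod m) = k • v := fun k => ZMod.lift_coe m _ k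
  -- orthogonal complement
  set W : AddSubgroup T := (b.flip u).ker ⊓ (b.flip v).ker with hW
  have hWmem : ∀ t : T, t ∈ W ↔ b t u = 0 ∧ b t v = 0 := by
    intro t
    simp [hW, AddSubgroup.mem_inf, AddMonoidHom.mem_ker]
  haveI : NeZero m := ⟨hm0⟩
  set h : ((ZMod m × ZMod m) × W) →+ T := (gu.coprod gv).coprod W.subtype with hh
  have happly : ∀ (i j : ZMod m) (w : W), h ((i, j), w) = gu i + gv j + (w : T) := by
    intro i j w
    simp [hh, AddMonoidHom.coprod_apply]
  have hbvv : b v v = 0 := halt v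
  have hbuu : b u u = 0 := halt u
  have hbvu : b v u = -τ := by rw [hskew v u, hbuv]
  -- injectivity
  have hinj_h : Function.Injective h := by
    rw [injective_iff_map_eq_zero]
    rintro ⟨⟨i, j⟩, w⟩ h0
    rw [happly] at h0
    obtain ⟨k, rfl⟩ := ZMod.intCast_surjective i
    obtain ⟨l, rfl⟩ := ZMod.intCast_surjective j
    rw [hgu_coe, hgv_coe] at h0
    obtain ⟨hwu, hwv⟩ := (hWmem w).mp w.2
    have hbv : b (k • u + l • v + (w : T)) v = 0 := by rw [h0, map_zero, AddMonoidHom.zero_apply]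
    simp only [map_add, map_zsmul, AddMonoidHom.add_apply, AddMonoidHom.smul_apply,
      hbuv, hbvv, hwv, smul_zero, add_zero] at hbv
    have hk : (m : ℤ) ∣ k := (hτ_zero k).mp hbv
    have hbu : b u (k • u + l • v + (w : T)) = 0 := by rw [h0, map_zero]
    have hbuw : b u (w : T) = 0 := by rw [hskew u w, hwu, neg_zero]
    simp only [map_add, map_zsmul, hbuu, hbuv, hbuw, smul_zero, add_zero, zero_add] at hbu
    have hl : (m : ℤ) ∣ l := (hτ_zero l).mp hbu
    have hi0 : ((k : ZMod m) = 0) := (ZMod.intCast_zmod_eq_zero_iff_dvd k m).mpr hk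
    have hj0 : ((l : ZMod m) = 0) := (ZMod.intCast_zmod_eq_zero_iff_dvd l m).mpr hl
    have hw0 : (w : T) = 0 := by
      have hku : k • u = 0 := by
        rw [← hgu_coe, hi0, map_zero]
      have hlv : l • v = 0 := by
        rw [← hgv_coe, hj0, map_zero]
      rw [hku, hlv, zero_add, zero_add] at h0
      exact h0
    have : (((k : ZMod m), (l : ZMod m)), w) = (((0 : ZMod m), (0 : ZMod m)),
        (0 : W)) := by
      rw [hi0, hj0]
      congr 1
      exact Subtype.ext hw0
    simpa using this
  -- surjectivity
  have hsurj_h : Function.Surjective h := by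
    intro t
    obtain ⟨k, hk⟩ := torsion_aux m hm0 (b t v) (by
      rw [← AddMonoidHom.smul_apply, ← map_nsmul, hsm, map_zero, AddMonoidHom.zero_apply])
    obtain ⟨l, hl⟩ := torsion_aux m hm0 (b u t) (by
      rw [← map_nsmul, hsm, map_zero])
    set w0 : T := t - k • u - l • v with hw0
    have hw0mem : w0 ∈ W := by
      rw [hWmem]
      constructor
      · have htu : b t u = -(l • τ) := by
          rw [hskew t u, ← hl]  -- b t u = - b u t = -(l•τ)
        simp only [hw0, map_sub, map_zsmul, AddMonoidHom.sub_apply, AddMonoidHom.smul_apply,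
          hbuu, hbvu, htu, smul_zero, smul_neg]
        abel
      · simp only [hw0, map_sub, map_zsmul, AddMonoidHom.sub_apply, AddMonoidHom.smul_apply,
          hbuv, hbvv, hk, smul_zero]
        abel
    refine ⟨(((k : ZMod m), (l : ZMod m)), ⟨w0, hw0mem⟩), ?_⟩
    rw [happly, hgu_coe, hgv_coe]
    simp only [hw0]
    abel
  have hbij_h : Function.Bijective h := ⟨hinj_h, hsurj_h⟩
  set e1 : ((ZMod m × ZMod m) × W) ≃+ T := AddEquiv.ofBijective h hbij_h with he1
  -- cardinality
  have hcardT : Nat.card T = m * m * Nat.card W := by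
    rw [← Nat.card_congr e1.toEquiv, Nat.card_prod, Nat.card_prod, Nat.card_zmod]
  have hcardW_lt : Nat.card W < n := by
    have hWpos : 0 < Nat.card W := Nat.card_pos
    have h1 : 1 < m * m := lt_of_lt_of_le hm1 (Nat.le_mul_of_pos_right m (by omega))
    have h2 : Nat.card W < m * m * Nat.card W := (Nat.lt_mul_iff_one_lt_left hWpos).mpr h1
    rw [← hcardT, hcard] at h2
    exact h2
  -- restricted form
  set b' : W →+ W →+ AddCircle (1 : ℚ) := ((b.comp W.subtype).flip.comp W.subtype).flip with hb'
  have hb'apply : ∀ w w' : W, b' w w' = b (w : T) (w' : T) := by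
    intro w w'
    simp [hb', AddMonoidHom.flip_apply]
  have halt' : ∀ w : W, b' w w = 0 := fun w => by rw [hb'apply]; exact halt _
  have hinj' : Function.Injective (fun w : W => b' w) := by
    have : Function.Injective b' := by
      rw [injective_iff_map_eq_zero]
      intro w hw0
      have hbw : b (w : T) = 0 := by
        ext t
        obtain ⟨⟨⟨i, j⟩, w'⟩, rfl⟩ := hsurj_h t
        rw [happly]
        obtain ⟨k, rfl⟩ := ZMod.intCast_surjective i
        obtain ⟨l, rfl⟩ := ZMod.intCast_surjective j
        rw [hgu_coe, hgv_coe]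
        obtain ⟨hwu, hwv⟩ := (hWmem w).mp w.2
        have h1 : b (w : T) (w' : T) = 0 := by
          rw [← hb'apply, hw0, AddMonoidHom.zero_apply]
        simp [map_add, map_zsmul, hwu, hwv, h1]
      have : (w : T) = 0 := by
        apply hinj
        simp only [hbw]
        rw [map_zero]
      exact Subtype.ext this
    exact this
  obtain ⟨K, instK, finK, ⟨eW⟩⟩ := IH (Nat.card W) hcardW_lt W rfl b' halt' hinj'
  refine ⟨ZMod m × K, inferInstance, inferInstance, ⟨?_⟩⟩
  have e2 : T ≃+ (ZMod m × ZMod m) × (K × K) :=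
    e1.symm.trans (AddEquiv.prodCongr (AddEquiv.refl _) eW)
  exact e2.trans (AddEquiv.prodProdProdComm _ _ _ _)

/-- Wall. If a finite abelian group `T` carries a nondegenerate
skew-symmetric bilinear form `b : T × T → ℚ/ℤ` with `b x x = 0` for all `x`, then
`T ≅ H ⊕ H` for some finite abelian group `H`; in particular `|T|` is a perfect
square. Here `ℚ/ℤ` is realized as `AddCircle (1 : ℚ)`. -/
theorem stmt_7 (T : Type) [AddCommGroup T] [Finite T]
    (b : T →+ T →+ AddCircle (1 : ℚ))
    (hskew : ∀ x y : T, b x y = - b y x)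
    (halt : ∀ x : T, b x x = 0)
    (hnondeg : Function.Bijective fun x : T => b x) :
    (∃ (H : Type) (_ : AddCommGroup H) (_ : Finite H), Nonempty (T ≃+ H × H)) ∧
      ∃ k : ℕ, Nat.card T = k ^ 2 := by
  obtain ⟨H, instH, finH, ⟨e⟩⟩ := wall_aux (Nat.card T) T rfl b halt hnondeg.injective
  refine ⟨⟨H, instH, finH, ⟨e⟩⟩, ⟨Nat.card H, ?_⟩⟩
  rw [Nat.card_congr e.toEquiv, Nat.card_prod, sq]
end

section
/- Let n = 2k+1 ≥ 5 be odd and suppose the groups B_q := H_q(W;ℤ) (2 ≤ q ≤ n-2) and C_q := H_q(M;ℤ) (2 ≤ q ≤ n-2) are finite abelian groups fitting into a long exact sequence ⋯ → C_{q+1} → B_{q+1} → B_{n-q-1} → C_q → B_q → B_{n-q} → ⋯ beginning with 0 → B_2 and ending with B_{n-2} → 0, and satisfying the Poincaré duality condition |C_q| = |C_{n-1-q}| for 1 ≤ q ≤ n-2. Then |C_k| is the square of an integer. -/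
lemma aux_card_split {G H : Type} [AddCommGroup G] [AddCommGroup H] [Finite G]
    (f : G →+ H) : Nat.card G = Nat.card f.range * Nat.card f.ker := by
  rw [AddSubgroup.card_eq_card_quotient_mul_card_addSubgroup f.ker,
    Nat.card_congr (QuotientAddGroup.quotientKerEquivRange f).toEquiv]

lemma aux_range_one_left {G H : Type} [AddCommGroup G] [AddCommGroup H]
    (f : G →+ H) (hG : Nat.card G = 1) : Nat.card f.range = 1 := by
  have hs : Subsingleton G := (Nat.card_eq_one_iff_unique.mp hG).1
  have : f.range = ⊥ := by
    apply le_antisymm _ bot_le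
    rintro x ⟨y, rfl⟩
    simp [Subsingleton.elim y 0]
  rw [this]
  exact AddSubgroup.card_bot

lemma aux_range_one_right {G H : Type} [AddCommGroup G] [AddCommGroup H]
    (f : G →+ H) (hH : Nat.card H = 1) : Nat.card f.range = 1 := by
  have hs : Subsingleton H := (Nat.card_eq_one_iff_unique.mp hH).1
  exact Nat.card_eq_one_iff_unique.mpr ⟨inferInstance, ⟨0, AddSubgroup.zero_mem _⟩⟩

lemma aux_main (g mm : ℕ → ℕ) (N : ℕ)
    (hg : ∀ j, g j = mm j * mm (j + 1))
    (hm0 : mm 0 = 1) (hmT : mm (2 * N + 1) = 1)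
    (hsymg : ∀ j < N, g (N + 1 + j) = g (N - 1 - j))
    (hpos : ∀ j, 0 < g j) :
    ∃ c : ℕ, g N = c ^ 2 := by
  let E : ℕ → ℕ := fun t => ∏ j ∈ Finset.range t, if Even j then g j else 1
  let O : ℕ → ℕ := fun t => ∏ j ∈ Finset.range t, if Even j then 1 else g j
  have key : ∀ t : ℕ, E t * (if Even t then mm t else 1)
      = O t * (if Even t then 1 else mm t) := by
    intro t
    induction t with
    | zero => simp [E, O, hm0]
    | succ t ih =>
      by_cases h : Even t
      · have h' : ¬ Even (t + 1) := by simp [Nat.even_add_one, h]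
        simp only [E, O, Finset.prod_range_succ, if_pos h, if_neg h', mul_one] at ih ⊢
        rw [hg t, ← mul_assoc, ih]
      · have h' : Even (t + 1) := by simpa [Nat.even_add_one] using h
        simp only [E, O, Finset.prod_range_succ, if_pos h', if_neg h, mul_one] at ih ⊢
        rw [ih, hg t, ← mul_assoc]
  have hEO : E (2 * N + 1) = O (2 * N + 1) := by
    have := key (2 * N + 1)
    have hodd : ¬ Even (2 * N + 1) := by simp [Nat.even_add_one, parity_simps]
    simpa [if_neg hodd, hmT] using this
  have htot : ∏ j ∈ Finset.range (2 * N + 1), g j = E (2 * N + 1) ^ 2 := by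
    have : ∀ j, g j = (if Even j then g j else 1) * (if Even j then 1 else g j) := by
      intro j; split_ifs <;> simp
    calc ∏ j ∈ Finset.range (2 * N + 1), g j
        = ∏ j ∈ Finset.range (2 * N + 1),
            ((if Even j then g j else 1) * (if Even j then 1 else g j)) := by
          exact Finset.prod_congr rfl fun j _ => this j
      _ = E (2 * N + 1) * O (2 * N + 1) := Finset.prod_mul_distrib
      _ = E (2 * N + 1) ^ 2 := by rw [← hEO, sq]
  set P : ℕ := ∏ j ∈ Finset.range N, g j with hP
  have hsplit : ∏ j ∈ Finset.range (2 * N + 1), g j = g N * P ^ 2 := by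
    have h1 : 2 * N + 1 = (N + 1) + N := by ring
    rw [h1, Finset.prod_range_add, Finset.prod_range_succ]
    have h2 : ∏ j ∈ Finset.range N, g (N + 1 + j) = P := by
      calc ∏ j ∈ Finset.range N, g (N + 1 + j)
          = ∏ j ∈ Finset.range N, g (N - 1 - j) :=
            Finset.prod_congr rfl fun j hj => hsymg j (Finset.mem_range.mp hj)
        _ = P := by
            rw [hP]
            exact Finset.prod_range_reflect g N
    rw [h2]; ring
  have hPpos : 0 < P := Finset.prod_pos fun j _ => hpos j
  have heq : g N * P ^ 2 = E (2 * N + 1) ^ 2 := by rw [← hsplit, htot]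
  have hdvd : P ∣ E (2 * N + 1) := by
    rw [← Nat.pow_dvd_pow_iff (two_ne_zero)]
    exact ⟨g N, by rw [← heq]; ring⟩
  obtain ⟨c, hc⟩ := hdvd
  refine ⟨c, ?_⟩
  have : g N * P ^ 2 = c ^ 2 * P ^ 2 := by rw [heq, hc]; ring
  exact Nat.eq_of_mul_eq_mul_right (by positivity) this


/-- algebraic core of Proposition 4.2. Let `n = 2k+1 ≥ 5` be odd,
and let `B q` (the groups `H_q(W;ℤ)`) and `C q` (the groups `H_q(M;ℤ)`) be finite
abelian groups fitting into a long exact sequence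
`⋯ → C (q+1) → B (q+1) → B (n-q-1) → C q → B q → B (n-q) → ⋯`
(beginning with `0 → B 2` and ending with `B (n-2) → 0`), encoded as a long exact
sequence `(A i)_{i ∈ ℤ}` whose entries follow the period-3 pattern
`A (3s) ≅ C (k-s)`, `A (3s+1) ≅ B (k-s)`, `A (3s+2) ≅ B (k+1+s)` in the relevant
ranges and are trivial outside them. If moreover Poincaré duality
`|C q| = |C (n-1-q)|` holds for `1 ≤ q ≤ n-2`, then `|C k|` is the square of an
integer. -/
theorem stmt_12 (k : ℕ) (hk : 2 ≤ k) (n : ℤ) (hn : n = 2 * (k : ℤ) + 1)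
    (B C : ℤ → Type) [∀ q, AddCommGroup (B q)] [∀ q, AddCommGroup (C q)]
    [∀ q, Finite (B q)] [∀ q, Finite (C q)]
    (A : ℤ → Type) [∀ i, AddCommGroup (A i)] [∀ i, Finite (A i)]
    (α : ∀ i : ℤ, A i →+ A (i + 1))
    (hexact : ∀ i : ℤ, (α (i + 1)).ker = (α i).range)
    (hA0 : ∀ s : ℤ, Nat.card (A (3 * s)) =
      if 2 ≤ (k : ℤ) - s ∧ (k : ℤ) - s ≤ n - 3 then Nat.card (C ((k : ℤ) - s)) else 1)
    (hA1 : ∀ s : ℤ, Nat.card (A (3 * s + 1)) =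
      if 2 ≤ (k : ℤ) - s ∧ (k : ℤ) - s ≤ n - 2 then Nat.card (B ((k : ℤ) - s)) else 1)
    (hA2 : ∀ s : ℤ, Nat.card (A (3 * s + 2)) =
      if 2 ≤ (k : ℤ) + 1 + s ∧ (k : ℤ) + 1 + s ≤ n - 2 then
        Nat.card (B ((k : ℤ) + 1 + s)) else 1)
    (hdual : ∀ q : ℤ, 1 ≤ q → q ≤ n - 2 →
      Nat.card (C q) = Nat.card (C (n - 1 - q))) :
    ∃ j : ℕ, Nat.card (C (k : ℤ)) = j ^ 2 := by
  have hcardA : ∀ x y : ℤ, x = y → Nat.card (A x) = Nat.card (A y) := by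
    intro x y h; rw [h]
  have hcardB : ∀ x y : ℤ, x = y → Nat.card (B x) = Nat.card (B y) := by
    intro x y h; rw [h]
  have hcardC : ∀ x y : ℤ, x = y → Nat.card (C x) = Nat.card (C y) := by
    intro x y h; rw [h]
  have hrange : ∀ x y : ℤ, x = y →
      Nat.card ((α x).range) = Nat.card ((α y).range) := by
    intro x y h; rw [h]
  -- symmetry of the cards of the long exact sequence about 0
  have hsym : ∀ i : ℤ, Nat.card (A i) = Nat.card (A (-i)) := by
    intro i
    have h3 : i % 3 = 0 ∨ i % 3 = 1 ∨ i % 3 = 2 := by omega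
    rcases h3 with h | h | h
    · obtain ⟨s, hs⟩ : ∃ s, i = 3 * s := ⟨i / 3, by omega⟩
      rw [hcardA i (3 * s) hs, hcardA (-i) (3 * (-s)) (by omega), hA0, hA0]
      by_cases hcond : 2 ≤ (k : ℤ) - s ∧ (k : ℤ) - s ≤ n - 3
      · rw [if_pos hcond, if_pos (show 2 ≤ (k : ℤ) - -s ∧ (k : ℤ) - -s ≤ n - 3 by omega)]
        have hd := hdual ((k : ℤ) - s) (by omega) (by omega)
        rw [hd, hcardC (n - 1 - ((k : ℤ) - s)) ((k : ℤ) - -s) (by omega)]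
      · rw [if_neg hcond, if_neg (show ¬(2 ≤ (k : ℤ) - -s ∧ (k : ℤ) - -s ≤ n - 3) by omega)]
    · obtain ⟨s, hs⟩ : ∃ s, i = 3 * s + 1 := ⟨i / 3, by omega⟩
      rw [hcardA i (3 * s + 1) hs, hcardA (-i) (3 * (-s - 1) + 2) (by omega), hA1, hA2]
      by_cases hcond : 2 ≤ (k : ℤ) - s ∧ (k : ℤ) - s ≤ n - 2
      · rw [if_pos hcond,
          if_pos (show 2 ≤ (k : ℤ) + 1 + (-s - 1) ∧ (k : ℤ) + 1 + (-s - 1) ≤ n - 2 by omega)]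
        exact (hcardB ((k : ℤ) + 1 + (-s - 1)) ((k : ℤ) - s) (by ring)).symm
      · rw [if_neg hcond,
          if_neg (show ¬(2 ≤ (k : ℤ) + 1 + (-s - 1) ∧ (k : ℤ) + 1 + (-s - 1) ≤ n - 2) by omega)]
    · obtain ⟨s, hs⟩ : ∃ s, i = 3 * s + 2 := ⟨i / 3, by omega⟩
      rw [hcardA i (3 * s + 2) hs, hcardA (-i) (3 * (-s - 1) + 1) (by omega), hA2, hA1]
      by_cases hcond : 2 ≤ (k : ℤ) + 1 + s ∧ (k : ℤ) + 1 + s ≤ n - 2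
      · rw [if_pos hcond,
          if_pos (show 2 ≤ (k : ℤ) - (-s - 1) ∧ (k : ℤ) - (-s - 1) ≤ n - 2 by omega)]
        exact (hcardB ((k : ℤ) - (-s - 1)) ((k : ℤ) + 1 + s) (by ring)).symm
      · rw [if_neg hcond,
          if_neg (show ¬(2 ≤ (k : ℤ) - (-s - 1) ∧ (k : ℤ) - (-s - 1) ≤ n - 2) by omega)]
  set N : ℕ := 3 * k - 4 with hNdef
  -- hypotheses of aux_main
  have hg : ∀ j : ℕ, Nat.card (A (-(N : ℤ) + j)) =
      Nat.card ((α (-(N : ℤ) - 1 + j)).range) *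
      Nat.card ((α (-(N : ℤ) - 1 + (j + 1 : ℕ))).range) := by
    intro j
    rw [hcardA (-(N : ℤ) + j) ((-(N : ℤ) - 1 + j) + 1) (by ring)]
    rw [aux_card_split (α ((-(N : ℤ) - 1 + j) + 1))]
    rw [hexact (-(N : ℤ) - 1 + j)]
    rw [hrange ((-(N : ℤ) - 1 + (j : ℤ)) + 1) (-(N : ℤ) - 1 + ((j + 1 : ℕ) : ℤ))
      (by push_cast; ring)]
    ring
  have hm0 : Nat.card ((α (-(N : ℤ) - 1 + ((0 : ℕ) : ℤ))).range) = 1 := by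
    apply aux_range_one_left
    rw [hcardA (-(N : ℤ) - 1 + ((0 : ℕ) : ℤ)) (3 * (1 - (k : ℤ))) (by push_cast; omega), hA0]
    rw [if_neg (by omega)]
  have hmT : Nat.card ((α (-(N : ℤ) - 1 + ((2 * N + 1 : ℕ) : ℤ))).range) = 1 := by
    apply aux_range_one_right
    rw [hcardA ((-(N : ℤ) - 1 + ((2 * N + 1 : ℕ) : ℤ)) + 1) (3 * ((k : ℤ) - 1))
      (by push_cast; omega), hA0]
    rw [if_neg (by omega)]
  have hsymg : ∀ j < N, Nat.card (A (-(N : ℤ) + ((N + 1 + j : ℕ) : ℤ))) =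
      Nat.card (A (-(N : ℤ) + ((N - 1 - j : ℕ) : ℤ))) := by
    intro j hj
    rw [hcardA (-(N : ℤ) + ((N + 1 + j : ℕ) : ℤ)) ((j : ℤ) + 1) (by push_cast; ring)]
    rw [hcardA (-(N : ℤ) + ((N - 1 - j : ℕ) : ℤ)) (-((j : ℤ) + 1)) (by omega)]
    exact hsym _
  have hpos : ∀ j : ℕ, 0 < Nat.card (A (-(N : ℤ) + j)) := fun j => Nat.card_pos
  obtain ⟨c, hc⟩ := aux_main (fun j => Nat.card (A (-(N : ℤ) + j)))
    (fun j => Nat.card ((α (-(N : ℤ) - 1 + j)).range)) N hg hm0 hmT hsymg hpos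
  refine ⟨c, ?_⟩
  calc Nat.card (C (k : ℤ)) = Nat.card (C ((k : ℤ) - 0)) := hcardC _ _ (by ring)
    _ = Nat.card (A (3 * 0)) := by
        rw [hA0 0, if_pos (show 2 ≤ (k : ℤ) - 0 ∧ (k : ℤ) - 0 ≤ n - 3 by omega)]
    _ = Nat.card (A (-(N : ℤ) + (N : ℕ))) := hcardA _ _ (by omega)
    _ = c ^ 2 := hc
end
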